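/- If Player 0 wins the reachability game from vertex v, then Player 0 has a positional (memoryless) winning strategy from v: a strategy depending only on the current vertex. -/
import Mathlib


open scoped Classical

/-- A vertex is terminal if it has no outgoing edge. -/
def Terminal {V : Type*} (E : V → V → Prop) (u : V) : Prop := ∀ w, ¬ E u w

/-- A strategy: given the history of earlier vertices and the current vertex, choose the next one. -/
def Strat (V : Type*) : Type _ := List V → V → V

/-- The next move: the owner of the current vertex chooses. `V0` is Player 0's vertex set. -/
noncomputable def moveOf {V : Type*} (V0 : Set V) (σ τ : Strat V) (h : List V) (u : V) : V :=
  if u ∈ V0 then σ h u else τ h u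

/-- The play determined by strategies `σ` (Player 0) and `τ` (Player 1) from `v`:
`runOf … n = some (h, u)` means after `n` steps the history is `h` and the current vertex is `u`;
the play stops (value `none`) after a terminal vertex is reached. -/
noncomputable def runOf {V : Type*} (E : V → V → Prop) (V0 : Set V) (σ τ : Strat V) (v : V) :
    ℕ → Option (List V × V)
  | 0 => some ([], v)
  | n+1 => (runOf E V0 σ τ v n).bind fun hu =>
      if Terminal E hu.2 then none
      else some (hu.1 ++ [hu.2], moveOf V0 σ τ hu.1 hu.2)

/-- A strategy is legal if it always proposes a move along an edge, whenever a move exists. -/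
def Legal {V : Type*} (E : V → V → Prop) (σ : Strat V) : Prop :=
  ∀ h u, ¬ Terminal E u → E u (σ h u)

/-- Player 0 wins the play of `σ` against `τ` from `v` iff some visited vertex is in the
goal set `F`, or the play ends in a terminal vertex where Player 1 is stuck. -/
def Win0Play {V : Type*} (E : V → V → Prop) (V0 F : Set V) (σ τ : Strat V) (v : V) : Prop :=
  ∃ n hu, runOf E V0 σ τ v n = some hu ∧ (hu.2 ∈ F ∨ (Terminal E hu.2 ∧ hu.2 ∉ V0))

/-- Player 0 has a winning strategy from `v`. -/
def Player0Wins {V : Type*} (E : V → V → Prop) (V0 F : Set V) (v : V) : Prop :=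
  ∃ σ, Legal E σ ∧ ∀ τ, Legal E τ → Win0Play E V0 F σ τ v

/-- Player 1 has a winning strategy from `v`. -/
def Player1Wins {V : Type*} (E : V → V → Prop) (V0 F : Set V) (v : V) : Prop :=
  ∃ τ, Legal E τ ∧ ∀ σ, Legal E σ → ¬ Win0Play E V0 F σ τ v

/-- One step of the attractor operator for Player 0. -/
def AttrStep {V : Type*} (E : V → V → Prop) (V0 F : Set V) (X : Set V) : Set V :=
  F ∪ {v | v ∈ V0 ∧ ∃ w, E v w ∧ w ∈ X} ∪ {v | v ∉ V0 ∧ (∃ w, E v w) ∧ ∀ w, E v w → w ∈ X}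

/-- The Player-0 attractor of `F`: the least set closed under the attractor operator. -/
def Attr {V : Type*} (E : V → V → Prop) (V0 F : Set V) : Set V :=
  ⋂₀ {X | AttrStep E V0 F X ⊆ X}

universe u
section Aux
variable {V : Type u} (E : V → V → Prop) (V0 F : Set V)

noncomputable def attrSeq (o : Ordinal.{u}) : Set V :=
  F ∪ {u | u ∉ V0 ∧ Terminal E u} ∪
  {u | u ∈ V0 ∧ ∃ w, E u w ∧ ∃ o' : Set.Iio o, w ∈ attrSeq o'.1} ∪
  {u | u ∉ V0 ∧ (∃ w, E u w) ∧ ∀ w, E u w → ∃ o' : Set.Iio o, w ∈ attrSeq o'.1}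
termination_by o
decreasing_by all_goals exact o'.2

theorem attrSeq_def (o : Ordinal.{u}) :
    attrSeq E V0 F o = F ∪ {u | u ∉ V0 ∧ Terminal E u} ∪
    {u | u ∈ V0 ∧ ∃ w, E u w ∧ ∃ o' < o, w ∈ attrSeq E V0 F o'} ∪
    {u | u ∉ V0 ∧ (∃ w, E u w) ∧ ∀ w, E u w → ∃ o' < o, w ∈ attrSeq E V0 F o'} := by
  rw [attrSeq]
  ext x
  simp only [Set.mem_union, Set.mem_setOf_eq, Subtype.exists, Set.mem_Iio, exists_prop]

/-- `u` is in the Player-0 attractor. -/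
def InA (u : V) : Prop := ∃ o, u ∈ attrSeq E V0 F o

/-- The attractor rank. -/
noncomputable def rk (u : V) : Ordinal.{u} := sInf {o | u ∈ attrSeq E V0 F o}

variable {E V0 F}

theorem rk_mem {u : V} (h : InA E V0 F u) : u ∈ attrSeq E V0 F (rk E V0 F u) := csInf_mem h

theorem rk_le {u : V} {o : Ordinal.{u}} (h : u ∈ attrSeq E V0 F o) : rk E V0 F u ≤ o :=
  csInf_le' h

theorem inA_of_F {u : V} (h : u ∈ F) : InA E V0 F u :=
  ⟨0, by rw [attrSeq_def]; exact Or.inl (Or.inl (Or.inl h))⟩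

theorem inA_of_stuck {u : V} (h1 : u ∉ V0) (h2 : Terminal E u) : InA E V0 F u :=
  ⟨0, by rw [attrSeq_def]; exact Or.inl (Or.inl (Or.inr ⟨h1, h2⟩))⟩

theorem inA_of_p0 {u w : V} (h1 : u ∈ V0) (h2 : E u w) (h3 : InA E V0 F w) : InA E V0 F u := by
  obtain ⟨o, ho⟩ := h3
  refine ⟨o + 1, ?_⟩
  rw [attrSeq_def]
  exact Or.inl (Or.inr ⟨h1, w, h2, o, Order.lt_succ o, ho⟩)

theorem inA_of_p1 {u : V} (h1 : u ∉ V0) (h2 : ¬ Terminal E u)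
    (h3 : ∀ w, E u w → InA E V0 F w) : InA E V0 F u := by
  have h2' : ∃ w, E u w := by
    by_contra hc; exact h2 fun w hw => hc ⟨w, hw⟩
  refine ⟨(⨆ w : {w // E u w}, rk E V0 F w.1) + 1, ?_⟩
  rw [attrSeq_def]
  refine Or.inr ⟨h1, h2', fun w hw => ⟨rk E V0 F w, ?_, rk_mem (h3 w hw)⟩⟩
  exact lt_of_le_of_lt (le_ciSup (Ordinal.bddAbove_range _) (⟨w, hw⟩ : {w // E u w})) (Order.lt_succ _)
end Aux

section Main
variable {V : Type u} (E : V → V → Prop) (V0 F : Set V)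

/-- Player 1's escape strategy from outside the attractor. -/
noncomputable def tau1 : Strat V := fun _ u =>
  if h : ∃ w, E u w ∧ ¬ InA E V0 F w then h.choose
  else if h2 : ∃ w, E u w then h2.choose else u

theorem tau1_legal : Legal E (tau1 E V0 F) := by
  intro h u hnt
  have h2 : ∃ w, E u w := by
    by_contra hc; exact hnt fun w hw => hc ⟨w, hw⟩
  unfold tau1
  by_cases hc : ∃ w, E u w ∧ ¬ InA E V0 F w
  · rw [dif_pos hc]; exact hc.choose_spec.1
  · rw [dif_neg hc, dif_pos h2]; exact h2.choose_spec

variable {E V0 F}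

theorem notInA_escape {u : V} (h : ¬ InA E V0 F u) (h1 : u ∉ V0) (h2 : ¬ Terminal E u) :
    ∃ w, E u w ∧ ¬ InA E V0 F w := by
  by_contra hc
  push_neg at hc
  exact h (inA_of_p1 h1 h2 hc)

theorem run_notInA {v : V} (σ : Strat V) (hσ : Legal E σ) (hv : ¬ InA E V0 F v) :
    ∀ n hu, runOf E V0 σ (tau1 E V0 F) v n = some hu → ¬ InA E V0 F hu.2 := by
  intro n
  induction n with
  | zero => intro hu hrun; simp [runOf] at hrun; rw [← hrun]; exact hv
  | succ n IH =>
    intro hu hrun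
    rw [runOf] at hrun
    cases hr : runOf E V0 σ (tau1 E V0 F) v n with
    | none => rw [hr] at hrun; simp at hrun
    | some p =>
      rw [hr] at hrun
      have hp : ¬ InA E V0 F p.2 := IH p hr
      by_cases ht : Terminal E p.2
      · simp [ht] at hrun
      · rw [Option.bind_some, if_neg ht] at hrun
        have : hu.2 = moveOf V0 σ (tau1 E V0 F) p.1 p.2 := by
          have h' := Option.some_inj.mp hrun
          rw [← h']
        rw [this]
        unfold moveOf
        by_cases hV : p.2 ∈ V0
        · rw [if_pos hV]
          intro hInA
          exact hp (inA_of_p0 hV (hσ p.1 p.2 ht) hInA)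
        · rw [if_neg hV]
          obtain ⟨w, hw, hwn⟩ := notInA_escape hp hV ht
          unfold tau1
          rw [dif_pos ⟨w, hw, hwn⟩]
          exact (Exists.choose_spec (⟨w, hw, hwn⟩ : ∃ w, E p.2 w ∧ ¬ InA E V0 F w)).2

theorem player0Wins_inA {v : V} (h : Player0Wins E V0 F v) : InA E V0 F v := by
  by_contra hv
  obtain ⟨σ, hσ, hwin⟩ := h
  obtain ⟨n, hu, hrun, hcond⟩ := hwin (tau1 E V0 F) (tau1_legal E V0 F)
  have hn := run_notInA σ hσ hv n hu hrun
  rcases hcond with hF | ⟨ht, hV⟩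
  · exact hn (inA_of_F hF)
  · exact hn (inA_of_stuck hV ht)

variable (E V0 F)

/-- Player 0's positional rank-decreasing strategy. -/
noncomputable def sigma0 : Strat V := fun _ u =>
  if h : ∃ w, E u w ∧ InA E V0 F w ∧ rk E V0 F w < rk E V0 F u then h.choose
  else if h2 : ∃ w, E u w then h2.choose else u

theorem sigma0_legal : Legal E (sigma0 E V0 F) := by
  intro h u hnt
  have h2 : ∃ w, E u w := by
    by_contra hc; exact hnt fun w hw => hc ⟨w, hw⟩
  unfold sigma0
  by_cases hc : ∃ w, E u w ∧ InA E V0 F w ∧ rk E V0 F w < rk E V0 F u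
  · rw [dif_pos hc]; exact hc.choose_spec.1
  · rw [dif_neg hc, dif_pos h2]; exact h2.choose_spec

variable {E V0 F}

theorem reach {v : V} (τ : Strat V) (hτ : Legal E τ) :
    ∀ o : Ordinal.{u}, ∀ u : V, InA E V0 F u → rk E V0 F u = o →
    ∀ n hist, runOf E V0 (sigma0 E V0 F) τ v n = some (hist, u) →
    Win0Play E V0 F (sigma0 E V0 F) τ v := by
  intro o
  induction o using Ordinal.induction with
  | h o IH =>
    intro u hu hrk n hist hrun
    by_cases hF : u ∈ F
    · exact ⟨n, (hist, u), hrun, Or.inl hF⟩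
    by_cases hstuck : Terminal E u ∧ u ∉ V0
    · exact ⟨n, (hist, u), hrun, Or.inr hstuck⟩
    have hmem := rk_mem hu
    rw [attrSeq_def] at hmem
    rcases hmem with ((hF' | ⟨hV, ht⟩) | ⟨hV, w, hw, o', ho', hwmem⟩) | ⟨hV, hex, hall⟩
    · exact absurd hF' hF
    · exact absurd ⟨ht, hV⟩ hstuck
    · -- u ∈ V0, strategy moves to a lower-rank vertex
      have hnt : ¬ Terminal E u := fun ht => ht w hw
      have hcond : ∃ w, E u w ∧ InA E V0 F w ∧ rk E V0 F w < rk E V0 F u :=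
        ⟨w, hw, ⟨o', hwmem⟩, lt_of_le_of_lt (rk_le hwmem) ho'⟩
      have hspec : E u (sigma0 E V0 F hist u) ∧ InA E V0 F (sigma0 E V0 F hist u) ∧
          rk E V0 F (sigma0 E V0 F hist u) < rk E V0 F u := by
        unfold sigma0
        rw [dif_pos hcond]
        exact hcond.choose_spec
      have hrun' : runOf E V0 (sigma0 E V0 F) τ v (n+1) =
          some (hist ++ [u], sigma0 E V0 F hist u) := by
        rw [runOf, hrun]
        rw [Option.bind_some, if_neg hnt]
        unfold moveOf
        rw [if_pos hV]
      exact IH (rk E V0 F (sigma0 E V0 F hist u)) (hrk ▸ hspec.2.2)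
        (sigma0 E V0 F hist u) hspec.2.1 rfl (n+1) (hist ++ [u]) hrun'
    · -- u ∉ V0, every move of Player 1 decreases the rank
      have hnt : ¬ Terminal E u := fun ht => ht hex.choose hex.choose_spec
      have hEτ : E u (τ hist u) := hτ hist u hnt
      obtain ⟨o', ho', hmem'⟩ := hall (τ hist u) hEτ
      have hrun' : runOf E V0 (sigma0 E V0 F) τ v (n+1) =
          some (hist ++ [u], τ hist u) := by
        rw [runOf, hrun]
        rw [Option.bind_some, if_neg hnt]
        unfold moveOf
        rw [if_neg hV]
      exact IH (rk E V0 F (τ hist u)) (hrk ▸ lt_of_le_of_lt (rk_le hmem') ho')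
        (τ hist u) ⟨o', hmem'⟩ rfl (n+1) (hist ++ [u]) hrun'
end Main


/-- If Player 0 wins the reachability game from `v`, then he wins with a positional
(memoryless) strategy, i.e. one depending only on the current vertex. -/
theorem positional_winning_strategy {V : Type*} (E : V → V → Prop) (V0 F : Set V) (v : V)
    (h : Player0Wins E V0 F v) :
    ∃ σ : Strat V, (∀ h₁ h₂ u, σ h₁ u = σ h₂ u) ∧ Legal E σ ∧
      ∀ τ, Legal E τ → Win0Play E V0 F σ τ v := by
  refine ⟨sigma0 E V0 F, fun _ _ _ => rfl, sigma0_legal E V0 F, fun τ hτ => ?_⟩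
  exact reach τ hτ (rk E V0 F v) v (player0Wins_inA h) rfl 0 [] rfl
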